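/- For any integer q ≥ 2 and any y with 0 ≤ y < 1, the minimum over θ ∈ [0, y] of (1/(1-θ))·H_q^{-1}(1-θ) is attained at θ = y, i.e., min_{0 ≤ θ ≤ y} H_q^{-1}(1-θ)/(1-θ) = H_q^{-1}(1-y)/(1-y). -/

import Mathlib

/-!
The entropy `H = H_q` is concave on `[0, 1]` with `H 0 = 0`, so the slope `H x / x` of its
chord from the origin is nonincreasing. Since `H` is increasing on `[0, 1 - 1/q]`, its inverse is
monotone; hence for `θ ≤ y` the points `a = H⁻¹(1 - y) ≤ b = H⁻¹(1 - θ)` satisfy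
`H b / b ≤ H a / a`, which is `a / (1 - y) ≤ b / (1 - θ)`.
-/

/-- The `q`-ary entropy function. -/
noncomputable def qaryEntropy (q x : ℝ) : ℝ :=
  x * Real.logb q (q - 1) - x * Real.logb q x - (1 - x) * Real.logb q (1 - x)

open Set

lemma ConcaveOn.mul_apply_le_mul_apply {𝕜 : Type*} [Field 𝕜] [LinearOrder 𝕜]
    [IsStrictOrderedRing 𝕜] {s : Set 𝕜} {f : 𝕜 → 𝕜} (hf : ConcaveOn 𝕜 s f)
    (h0 : (0 : 𝕜) ∈ s) (hf0 : 0 ≤ f 0) {a b : 𝕜} (ha : 0 ≤ a) (hab : a ≤ b) (hb : b ∈ s) :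
    a * f b ≤ b * f a := by
  rcases (ha.trans hab).eq_or_lt with rfl | hb0
  · simp [le_antisymm hab ha]
  -- `a` is the convex combination `(1 - a/b) • 0 + (a/b) • b`.
  have hw : 0 ≤ 1 - a / b := sub_nonneg.2 ((div_le_one hb0).2 hab)
  have hchord := hf.2 h0 hb hw (div_nonneg ha hb0.le) (sub_add_cancel 1 (a / b))
  simp only [smul_eq_mul, mul_zero, zero_add, div_mul_cancel₀ a hb0.ne'] at hchord
  calc a * f b = b * (a / b * f b) := by field_simp
    _ ≤ b * ((1 - a / b) * f 0 + a / b * f b) := by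
        gcongr
        exact le_add_of_nonneg_left (mul_nonneg hw hf0)
    _ ≤ b * f a := by gcongr

lemma StrictMonoOn.monotoneOn_of_rightInvOn {α β : Type*} [LinearOrder α] [Preorder β]
    {f : α → β} {g : β → α} {s : Set α} {t : Set β} (hf : StrictMonoOn f s) (hg : MapsTo g t s)
    (hgf : RightInvOn g f t) : MonotoneOn g t := by
  intro x hx y hy hxy
  rwa [← hf.le_iff_le (hg hx) (hg hy), hgf hx, hgf hy]

lemma qaryEntropy_eq_smul (q : ℕ) :
    qaryEntropy q = (Real.log q)⁻¹ • Real.qaryEntropy q := by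
  ext x
  simp only [qaryEntropy, Real.qaryEntropy, Real.binEntropy, Pi.smul_apply, smul_eq_mul,
    Real.logb, Real.log_inv]
  push_cast
  ring

lemma qaryEntropy_strictMonoOn {q : ℕ} (hq : 2 ≤ q) :
    StrictMonoOn (qaryEntropy q) (Icc 0 (1 - 1 / (q : ℝ))) := by
  have hlog : 0 < (Real.log q)⁻¹ := inv_pos.2 (Real.log_pos (by exact_mod_cast hq))
  rw [qaryEntropy_eq_smul]
  exact fun x hx y hy hxy ↦
    mul_lt_mul_of_pos_left (Real.qaryEntropy_strictMonoOn hq hx hy hxy) hlog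

lemma concaveOn_qaryEntropy {q : ℕ} (hq : 2 ≤ q) : ConcaveOn ℝ (Icc 0 1) (qaryEntropy q) := by
  have hlog : 0 ≤ (Real.log q)⁻¹ :=
    inv_nonneg.2 (Real.log_nonneg (by exact_mod_cast hq.trans' one_le_two))
  rw [qaryEntropy_eq_smul]
  exact Real.strictConcaveOn_qaryEntropy.concaveOn.smul hlog

lemma qaryEntropy_zero (q : ℝ) : qaryEntropy q 0 = 0 := by
  simp [qaryEntropy]

theorem qaryEntropy_inv_min_general (q : ℕ) (hq : 2 ≤ q) (Hinv : ℝ → ℝ)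
    (hmaps : ∀ t ∈ Set.Icc (0 : ℝ) 1, Hinv t ∈ Set.Icc 0 (1 - 1 / (q : ℝ)))
    (hright : ∀ t ∈ Set.Icc (0 : ℝ) 1, qaryEntropy q (Hinv t) = t)
    (y : ℝ) (hy0 : 0 ≤ y) (hy1 : y < 1) :
    IsLeast ((fun θ : ℝ => Hinv (1 - θ) / (1 - θ)) '' Set.Icc 0 y)
      (Hinv (1 - y) / (1 - y)) := by
  refine ⟨⟨y, ⟨hy0, le_rfl⟩, rfl⟩, ?_⟩
  rintro _ ⟨θ, ⟨hθ0, hθy⟩, rfl⟩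
  have hy : 1 - y ∈ Icc (0 : ℝ) 1 := ⟨by linarith, by linarith⟩
  have hθ : 1 - θ ∈ Icc (0 : ℝ) 1 := ⟨by linarith, by linarith⟩
  have hHinv_mono : MonotoneOn Hinv (Icc 0 1) :=
    (qaryEntropy_strictMonoOn hq).monotoneOn_of_rightInvOn hmaps hright
  have hab : Hinv (1 - y) ≤ Hinv (1 - θ) := hHinv_mono hy hθ (by linarith)
  have hb : Hinv (1 - θ) ∈ Icc (0 : ℝ) 1 :=
    Icc_subset_Icc_right (by simp) (hmaps _ hθ)
  have hchord := (concaveOn_qaryEntropy hq).mul_apply_le_mul_apply (by simp)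
    (qaryEntropy_zero q).ge (hmaps _ hy).1 hab hb
  rw [hright _ hy, hright _ hθ] at hchord
  rw [div_le_div_iff₀ (by linarith) (by linarith)]
  exact hchord

/-- For any integer `q ≥ 2` and any `0 ≤ y < 1`, the minimum over `θ ∈ [0, y]` of
`H_q⁻¹(1-θ)/(1-θ)` is attained at `θ = y`:
`min_{0 ≤ θ ≤ y} H_q⁻¹(1-θ)/(1-θ) = H_q⁻¹(1-y)/(1-y)`. -/
theorem qaryEntropy_inv_min (q : ℕ) (hq : 2 ≤ q) (Hinv : ℝ → ℝ)
    (hmaps : ∀ t ∈ Set.Icc (0 : ℝ) 1, Hinv t ∈ Set.Icc 0 (1 - 1 / (q : ℝ)))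
    (hleft : ∀ x ∈ Set.Icc (0 : ℝ) (1 - 1 / (q : ℝ)), Hinv (qaryEntropy q x) = x)
    (hright : ∀ t ∈ Set.Icc (0 : ℝ) 1, qaryEntropy q (Hinv t) = t)
    (y : ℝ) (hy0 : 0 ≤ y) (hy1 : y < 1) :
    IsLeast ((fun θ : ℝ => Hinv (1 - θ) / (1 - θ)) '' Set.Icc 0 y)
      (Hinv (1 - y) / (1 - y)) :=
  qaryEntropy_inv_min_general q hq Hinv hmaps hright y hy0 hy1
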